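/- Let G be a graph and let X be a set of edges of G such that the induced subgraph G[X] is connected and contains at least two distinct cycles, and X is minimal with this property (a bicycle). Then G[X] is either a theta subgraph (two distinct vertices joined by three internally disjoint paths), a loose handcuff (two vertex-disjoint cycles joined by a minimal path), or a tight handcuff (two edge-disjoint cycles sharing exactly one vertex). -/

import Mathlib

open Matroid Set

namespace Bicirc

variable {α : Type*}

/-- A circuit of a matroid: a minimal dependent set. -/
def Circ (M : Matroid α) (C : Set α) : Prop :=
  M.Dep C ∧ ∀ D, D ⊂ C → M.Indep D

/-- A cocircuit: a circuit of the dual matroid. -/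
def Cocirc (M : Matroid α) (C : Set α) : Prop := Circ M✶ C

/-- Deletion of a set from a matroid. -/
def Del (M : Matroid α) (X : Set α) : Matroid α := M ↾ (M.E \ X)

/-- `e` is a loop of the matroid `M`. -/
def IsLoopE (M : Matroid α) (e : α) : Prop := Circ M {e}

/-- `e` is a coloop of the matroid `M`. -/
def IsColoopE (M : Matroid α) (e : α) : Prop := Cocirc M {e}

/-- A single element is a separator iff it is a loop or a coloop. -/
def SepElem (M : Matroid α) (e : α) : Prop := IsLoopE M e ∨ IsColoopE M e

/-- The rank of a set in a matroid (as a natural number). -/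
noncomputable def rk (M : Matroid α) (X : Set α) : ℕ :=
  sSup {n | ∃ I, M.Indep I ∧ I ⊆ X ∧ n = I.ncard}

/-- The rank of a matroid. -/
noncomputable def rkM (M : Matroid α) : ℕ := rk M M.E

/-- A matroid is connected if it is nonempty and every two distinct elements
lie in a common circuit. -/
def MConn (M : Matroid α) : Prop :=
  M.E.Nonempty ∧ ∀ e ∈ M.E, ∀ f ∈ M.E, e ≠ f → ∃ C, Circ M C ∧ e ∈ C ∧ f ∈ C

/-- `A` gives a `k`-separation `(A, M.E \ A)` of `M`. -/
def KSep (M : Matroid α) (k : ℕ) (A : Set α) : Prop :=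
  A ⊆ M.E ∧ k ≤ A.ncard ∧ k ≤ (M.E \ A).ncard ∧
    rk M A + rk M (M.E \ A) < rkM M + k

/-- A matroid is 3-connected if it has no `k`-separation for `k < 3`. -/
def ThreeConn (M : Matroid α) : Prop := ∀ k, 0 < k → k < 3 → ∀ A, ¬ KSep M k A

/-- Every pair of distinct elements of `C` lies in a common circuit of `M | C`. -/
def PairConn (M : Matroid α) (C : Set α) : Prop :=
  C ⊆ M.E ∧ ∀ e ∈ C, ∀ f ∈ C, e ≠ f → ∃ K, Circ (M ↾ C) K ∧ e ∈ K ∧ f ∈ K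

/-- `C` is a connected component of the matroid `M`. -/
def IsComp (M : Matroid α) (C : Set α) : Prop :=
  C.Nonempty ∧ PairConn M C ∧ ∀ D, PairConn M D → C ⊆ D → D = C

/-- A non-separating cocircuit: deleting it leaves a connected matroid. -/
def NonSepCocirc (M : Matroid α) (K : Set α) : Prop :=
  Cocirc M K ∧ MConn (Del M K)

/-- A cyclic flat: a flat whose restriction has no coloops. -/
def CyclicFlat (M : Matroid α) (Z : Set α) : Prop :=
  M.IsFlat Z ∧ ∀ e ∈ Z, ¬ IsColoopE (M ↾ Z) e

/-- `e` and `f` are clones: every cyclic flat contains one iff it contains the other. -/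
def Clones (M : Matroid α) (e f : α) : Prop :=
  ∀ Z, CyclicFlat M Z → (e ∈ Z ↔ f ∈ Z)

/-- A clonal class: a maximal set of pairwise clone elements. -/
def ClonalClass (M : Matroid α) (F : Set α) : Prop :=
  F ⊆ M.E ∧ (∀ e ∈ F, ∀ f ∈ F, Clones M e f) ∧
    ∀ F', F' ⊆ M.E → (∀ e ∈ F', ∀ f ∈ F', Clones M e f) → F ⊆ F' → F' = F

/-- Disjoint sets `X`, `Y` are skew: no circuit of `M` inside `X ∪ Y` meets both. -/
def Skew (M : Matroid α) (X Y : Set α) : Prop :=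
  ∀ C, Circ M C → C ⊆ X ∪ Y → (C ∩ X = ∅ ∨ C ∩ Y = ∅)

/-- A good cocircuit. -/
def GoodCocirc (M : Matroid α) (K : Set α) : Prop :=
  Cocirc M K ∧ (∃! D, IsComp (Del M K) D ∧ 1 < D.ncard) ∧
    ∀ x, IsColoopE (Del M K) x → ∀ D, IsComp (Del M K) D → 1 < D.ncard →
      ∃ F C, ClonalClass M F ∧ rk M F = 2 ∧ F ⊆ K ∧ Circ M C ∧ x ∈ C ∧
        C ∩ K ⊆ F ∧ (C ∩ K).ncard = 2 ∧ (C ∩ D).Nonempty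

/-! ### Multigraphs -/

/-- A multigraph on vertex type `V` with edge type `E`: each edge has a pair of ends. -/
structure MGraph (V : Type*) (E : Type*) where
  ends : E → Sym2 V

variable {V E : Type*}

/-- The vertices incident with at least one edge of `X`. -/
def VX (G : MGraph V E) (X : Set E) : Set V := {v | ∃ e ∈ X, v ∈ G.ends e}

/-- The set of edges incident with the vertex `v`. -/
def star (G : MGraph V E) (v : V) : Set E := {e | v ∈ G.ends e}

/-- The degree of `v` in the edge set `X` (loops count twice). -/
noncomputable def deg (G : MGraph V E) (X : Set E) (v : V) : ℕ :=
  ({e ∈ X | v ∈ G.ends e}).ncard + ({e ∈ X | G.ends e = s(v, v)}).ncard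

/-- Two edges of `X` sharing a vertex. -/
def EAdj (G : MGraph V E) (X : Set E) (a b : E) : Prop :=
  a ∈ X ∧ b ∈ X ∧ ∃ v, v ∈ G.ends a ∧ v ∈ G.ends b

/-- The subgraph `G[X]` is connected. -/
def ConnOn (G : MGraph V E) (X : Set E) : Prop :=
  ∀ a ∈ X, ∀ b ∈ X, Relation.ReflTransGen (EAdj G X) a b

/-- `C` is the edge set of a cycle of `G`. -/
def IsCycle (G : MGraph V E) (C : Set E) : Prop :=
  C.Nonempty ∧ ConnOn G C ∧ ∀ v ∈ VX G C, deg G C v = 2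

/-- `X` contains no cycle. -/
def Acyclic (G : MGraph V E) (X : Set E) : Prop := ∀ C, C ⊆ X → ¬ IsCycle G C

/-- `X` contains two distinct cycles. -/
def TwoCycles (G : MGraph V E) (X : Set E) : Prop :=
  ∃ C₁ C₂, C₁ ⊆ X ∧ C₂ ⊆ X ∧ IsCycle G C₁ ∧ IsCycle G C₂ ∧ C₁ ≠ C₂

/-- A bicycle: a minimal edge set inducing a connected subgraph with more than one cycle. -/
def IsBicycle (G : MGraph V E) (X : Set E) : Prop :=
  (ConnOn G X ∧ TwoCycles G X) ∧ ∀ Y, Y ⊂ X → ¬ (ConnOn G Y ∧ TwoCycles G Y)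

/-- `P` is the edge set of a path of `G` with end-vertices `u` and `v`. -/
def IsPathBtw (G : MGraph V E) (P : Set E) (u v : V) : Prop :=
  P.Nonempty ∧ ConnOn G P ∧ Acyclic G P ∧ u ≠ v ∧
    deg G P u = 1 ∧ deg G P v = 1 ∧ ∀ w ∈ VX G P, deg G P w ≤ 2

/-- `X` induces a theta subgraph of `G`. -/
def IsTheta (G : MGraph V E) (X : Set E) : Prop :=
  ∃ u v P₁ P₂ P₃, u ≠ v ∧
    IsPathBtw G P₁ u v ∧ IsPathBtw G P₂ u v ∧ IsPathBtw G P₃ u v ∧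
    P₁ ∩ P₂ = ∅ ∧ P₁ ∩ P₃ = ∅ ∧ P₂ ∩ P₃ = ∅ ∧
    VX G P₁ ∩ VX G P₂ = {u, v} ∧ VX G P₁ ∩ VX G P₃ = {u, v} ∧
    VX G P₂ ∩ VX G P₃ = {u, v} ∧ X = P₁ ∪ P₂ ∪ P₃

/-- `X` induces a loose handcuff of `G`. -/
def IsLooseHandcuff (G : MGraph V E) (X : Set E) : Prop :=
  ∃ C₁ C₂ P u v, IsCycle G C₁ ∧ IsCycle G C₂ ∧ VX G C₁ ∩ VX G C₂ = ∅ ∧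
    IsPathBtw G P u v ∧ VX G P ∩ VX G C₁ = {u} ∧ VX G P ∩ VX G C₂ = {v} ∧
    P ∩ C₁ = ∅ ∧ P ∩ C₂ = ∅ ∧ X = C₁ ∪ C₂ ∪ P

/-- `X` induces a tight handcuff of `G`. -/
def IsTightHandcuff (G : MGraph V E) (X : Set E) : Prop :=
  ∃ C₁ C₂ v, IsCycle G C₁ ∧ IsCycle G C₂ ∧ C₁ ∩ C₂ = ∅ ∧
    VX G C₁ ∩ VX G C₂ = {v} ∧ X = C₁ ∪ C₂

/-- Vertex adjacency via an edge. -/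
def VAdj (G : MGraph V E) (u w : V) : Prop := ∃ e, u ∈ G.ends e ∧ w ∈ G.ends e

/-- The graph `G` is connected. -/
def GConn (G : MGraph V E) : Prop := ∀ u w : V, Relation.ReflTransGen (VAdj G) u w

/-- The graph `G - x` is connected. -/
def ConnAvoid (G : MGraph V E) (x : V) : Prop :=
  ∀ u w : V, u ≠ x → w ≠ x →
    Relation.ReflTransGen
      (fun a b => a ≠ x ∧ b ≠ x ∧ ∃ e, x ∉ G.ends e ∧ a ∈ G.ends e ∧ b ∈ G.ends e) u w

/-- `G` is 2-connected: connected and with no cutvertex. -/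
def TwoConnGraph (G : MGraph V E) : Prop := GConn G ∧ ∀ x, ConnAvoid G x

/-- `C` is (the edge set of) a connected component of `G[X]`. -/
def IsGComp (G : MGraph V E) (X C : Set E) : Prop :=
  C ⊆ X ∧ C.Nonempty ∧ ConnOn G C ∧
    ∀ D, D ⊆ X → D.Nonempty → ConnOn G D → C ⊆ D → D = C

/-- The number of acyclic components of `G[X]`. -/
noncomputable def numAcyclicComps (G : MGraph V E) (X : Set E) : ℕ :=
  {C | IsGComp G X C ∧ Acyclic G C}.ncard

/-- `M` is the bicircular matroid of `G`: its circuits are precisely the bicycles. -/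
def IsBicircOf (G : MGraph V E) (M : Matroid E) : Prop :=
  M.E = Set.univ ∧ ∀ C, Circ M C ↔ IsBicycle G C

/-- The edge set `X` contains a pendent edge. -/
def PendentEdge (G : MGraph V E) (X : Set E) : Prop :=
  ∃ e ∈ X, ∃ w ∈ G.ends e, deg G X w = 1

/-- The graph `G - v` is a cycle. -/
def DelVIsCycle (G : MGraph V E) (v : V) : Prop :=
  IsCycle G {e | v ∉ G.ends e} ∧ ∀ w, w ≠ v → w ∈ VX G {e | v ∉ G.ends e}

/-! ### Matroid-labelled trees -/

/-- A matroid-labelled tree. -/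
structure MTree (α : Type*) where
  ι : Type
  fin : Fintype ι
  lab : ι → Matroid α
  adj : ι → ι → Prop
  symm : ∀ i j, adj i j → adj j i
  loopless : ∀ i, ¬ adj i i
  conn : ∀ i j, Relation.ReflTransGen adj i j
  acyc : ∀ i j, adj i j →
    ¬ Relation.ReflTransGen
        (fun a b => adj a b ∧ ¬(a = i ∧ b = j) ∧ ¬(a = j ∧ b = i)) i j
  card3 : (∃ i j : ι, i ≠ j) → ∀ i, 3 ≤ (lab i).E.ncard
  disj : ∀ i j, i ≠ j → ¬ adj i j → (lab i).E ∩ (lab j).E = ∅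
  meet : ∀ i j, adj i j →
    ∃ e, (lab i).E ∩ (lab j).E = {e} ∧ ¬ SepElem (lab i) e ∧ ¬ SepElem (lab j) e

/-- The basepoint elements of a matroid-labelled tree. -/
def MTree.bpts (T : MTree α) : Set α :=
  {e | ∃ i j, T.adj i j ∧ e ∈ (T.lab i).E ∧ e ∈ (T.lab j).E}

/-- The ground set of the matroid `M(T)`. -/
def MTree.ground (T : MTree α) : Set α := (⋃ i, (T.lab i).E) \ T.bpts

/-- The ground-set elements appearing in nodes of `S`. -/
def MTree.elems (T : MTree α) (S : Set T.ι) : Set α :=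
  (⋃ i ∈ S, (T.lab i).E) ∩ T.ground

/-- `S` induces a connected subgraph of the tree. -/
def MTree.SubConn (T : MTree α) (S : Set T.ι) : Prop :=
  ∀ i ∈ S, ∀ j ∈ S,
    Relation.ReflTransGen (fun a b => a ∈ S ∧ b ∈ S ∧ T.adj a b) i j

/-- The circuits of the matroid `M(T)`: glued along a connected subtree. -/
def MTree.IsTreeCircuit (T : MTree α) (C : Set α) : Prop :=
  ∃ (S : Set T.ι) (f : T.ι → Set α), S.Nonempty ∧ T.SubConn S ∧
    (∀ i ∈ S, Circ (T.lab i) (f i)) ∧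
    (∀ i ∈ S, ∀ j, T.adj i j → ∀ e, e ∈ (T.lab i).E → e ∈ (T.lab j).E →
      (e ∈ f i ↔ j ∈ S)) ∧
    C = (⋃ i ∈ S, f i) \ T.bpts

/-- `M = M(T)`. -/
def MTree.IsDecompOf (T : MTree α) (M : Matroid α) : Prop :=
  M.E = T.ground ∧ ∀ C, Circ M C ↔ T.IsTreeCircuit C

/-- A node whose matroid is a circuit. -/
def MTree.CircNode (T : MTree α) (i : T.ι) : Prop := Circ (T.lab i) (T.lab i).E

/-- A node whose matroid is a cocircuit. -/
def MTree.CocircNode (T : MTree α) (i : T.ι) : Prop := Cocirc (T.lab i) (T.lab i).E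

/-- `T` is the canonical (Cunningham–Edmonds) decomposition tree of `M`. -/
def MTree.IsCanonical (T : MTree α) (M : Matroid α) : Prop :=
  T.IsDecompOf M ∧
    (∀ i, ThreeConn (T.lab i) ∨ T.CircNode i ∨ T.CocircNode i) ∧
    ∀ i j, T.adj i j →
      ¬(T.CircNode i ∧ T.CircNode j) ∧ ¬(T.CocircNode i ∧ T.CocircNode j)

/-- The component of `T` minus the edge `{i, j}` containing `i`. -/
def MTree.side (T : MTree α) (i j : T.ι) : Set T.ι :=
  {k | Relation.ReflTransGen
        (fun a b => T.adj a b ∧ ¬(a = i ∧ b = j) ∧ ¬(a = j ∧ b = i)) i k}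

/-- `(A, B)` is displayed by an edge of `T`. -/
def MTree.DispEdge (T : MTree α) (A B : Set α) : Prop :=
  ∃ i j, T.adj i j ∧ A = T.elems (T.side i j) ∧ B = T.elems (T.side j i)

/-- The component of `T - n` containing `k`. -/
def MTree.compAvoid (T : MTree α) (n k : T.ι) : Set T.ι :=
  {k' | Relation.ReflTransGen (fun a b => T.adj a b ∧ a ≠ n ∧ b ≠ n) k k'}

/-- `(A, B)` is displayed by the node `n` of `T`. -/
def MTree.DispNode (T : MTree α) (n : T.ι) (A B : Set α) : Prop :=
  A ∪ B = T.ground ∧ A ∩ B = ∅ ∧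
    ∀ k, k ≠ n →
      (T.elems (T.compAvoid n k) ⊆ A ∨ T.elems (T.compAvoid n k) ⊆ B)

/-- `(A, B)` is a 2-separation of `M`. -/
def TwoSep (M : Matroid α) (A B : Set α) : Prop :=
  A ∪ B = M.E ∧ A ∩ B = ∅ ∧ 2 ≤ A.ncard ∧ 2 ≤ B.ncard ∧
    rk M A + rk M B ≤ rkM M + 1

/-- `X` is 2-separating in `M`. -/
def SepSet2 (M : Matroid α) (X : Set α) : Prop :=
  rk M X + rk M (M.E \ X) ≤ rkM M + 1

/-- A wedge relative to `A`: a maximal 2-separating nonempty proper subset of `M.E \ A`. -/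
def Wedge (M : Matroid α) (A X : Set α) : Prop :=
  X ⊆ M.E \ A ∧ X.Nonempty ∧ X ≠ M.E \ A ∧ SepSet2 M X ∧
    ∀ Y, Y ⊆ M.E \ A → Y.Nonempty → Y ≠ M.E \ A → SepSet2 M Y → X ⊆ Y → Y = X

/-- The rooted matroid `(N, L)` is bicircular: `N = B(H)` for some finite multigraph `H`
in which every element of `L` is a loop. -/
def RootedBicirc (N : Matroid α) (L : Set α) : Prop :=
  ∃ (V : Type) (_ : Fintype V) (_ : N.E.Finite) (G : MGraph V ↥N.E),
    (∀ D, Circ N D ↔ ∃ C : Set ↥N.E, IsBicycle G C ∧ D = Subtype.val '' C) ∧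
    ∀ l : ↥N.E, l.1 ∈ L → (G.ends l).IsDiag

end Bicirc

/-
Deleting a pendant edge, or an edge of a cycle when there are edges to spare, would leave a
smaller connected edge set with two cycles. So a bicycle `X` has minimum degree `2` and exactly
`|V(X)| + 1` edges, and by the handshake lemma its degree excess `∑ (deg v - 2)` is `2`: one
vertex has degree `4`, or two vertices `u, v` have degree `3`, all others degree `2`.
Fix a cycle `C ⊆ X`. Every component of `G[X \ C]` meets `C` in a vertex of degree at least `3`.
With a vertex of degree `4`, `X \ C` is a second cycle through it: a tight handcuff. If `u` and
`v` both lie on `C`, parity forces `X \ C` to be a single `u`–`v` path, which together with the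
two arcs of `C` is a theta. If only `u` lies on `C`, then `X \ C` is a `u`–`v` path followed by a
cycle through `v`: a loose handcuff.
-/

theorem Finset.sum_eq_two_cases {ι : Type*} [DecidableEq ι] {s : Finset ι} {f : ι → ℕ}
    (h : ∑ i ∈ s, f i = 2) :
    (∃ i ∈ s, f i = 2 ∧ ∀ j ∈ s, j ≠ i → f j = 0) ∨
      ∃ i ∈ s, ∃ j ∈ s, i ≠ j ∧ f i = 1 ∧ f j = 1 ∧ ∀ k ∈ s, k ≠ i → k ≠ j → f k = 0 := by
  obtain ⟨i, hi, hi0⟩ := Finset.exists_ne_zero_of_sum_ne_zero (h ▸ two_ne_zero)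
  have hsi := Finset.add_sum_erase s f hi
  have hzero : ∀ {t : Finset ι}, ∑ k ∈ t, f k = 0 → ∀ k ∈ t, f k = 0 :=
    fun ht => Finset.sum_eq_zero_iff.1 ht
  by_cases hi2 : f i = 2
  · refine .inl ⟨i, hi, hi2, fun j hj hji => hzero (by omega) j (Finset.mem_erase.2 ⟨hji, hj⟩)⟩
  obtain ⟨j, hj, hj0⟩ := Finset.exists_ne_zero_of_sum_ne_zero (s := s.erase i) (f := f) (by omega)
  have hsj := Finset.add_sum_erase _ f hj
  obtain ⟨hji, hj⟩ := Finset.mem_erase.1 hj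
  refine .inr ⟨i, hi, j, hj, hji.symm, by omega, by omega, fun k hk hki hkj =>
    hzero (t := (s.erase i).erase j) (by omega) k ?_⟩
  exact Finset.mem_erase.2 ⟨hkj, Finset.mem_erase.2 ⟨hki, hk⟩⟩

namespace Bicirc

variable {V E : Type*} {G : MGraph V E}

lemma exists_ends_eq (G : MGraph V E) (e : E) : ∃ x y, G.ends e = s(x, y) := by
  induction G.ends e using Sym2.ind with
  | _ x y => exact ⟨x, y, rfl⟩

lemma VX_mono {X Y : Set E} (h : X ⊆ Y) : VX G X ⊆ VX G Y :=
  fun _ ⟨e, he, hv⟩ => ⟨e, h he, hv⟩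

lemma nonempty_of_mem_VX {X : Set E} {v : V} (h : v ∈ VX G X) : X.Nonempty :=
  h.imp fun _ => And.left

lemma VX_union (X Y : Set E) : VX G (X ∪ Y) = VX G X ∪ VX G Y := by
  ext v
  simp only [VX, mem_union, mem_ofPred_eq, or_and_right, exists_or]

lemma VX_singleton {e : E} {x y : V} (h : G.ends e = s(x, y)) : VX G {e} = {x, y} := by
  ext v
  simp [VX, h]

lemma mem_VX_sdiff_singleton {X : Set E} {e : E} {x y v : V} (h : G.ends e = s(x, y))
    (hv : v ∈ VX G X) (hvx : v ≠ x) (hvy : v ≠ y) : v ∈ VX G (X \ {e}) := by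
  obtain ⟨f, hf, hvf⟩ := hv
  refine ⟨f, ⟨hf, ?_⟩, hvf⟩
  rintro rfl
  rcases Sym2.mem_iff.1 (h ▸ hvf) with rfl | rfl
  exacts [hvx rfl, hvy rfl]

instance finite_VX [Finite E] (X : Set E) : Finite (VX G X) := by
  have hVX : VX G X = ⋃ e ∈ X, VX G {e} := by ext; simp [VX]
  rw [hVX]
  refine Set.Finite.to_subtype (X.toFinite.biUnion fun e _ => ?_)
  obtain ⟨x, y, h⟩ := exists_ends_eq G e
  simp [VX_singleton h]

lemma deg_singleton_left {e : E} {x y : V} (h : G.ends e = s(x, y)) (hxy : x ≠ y) :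
    deg G {e} x = 1 := by
  have hinc : {f ∈ ({e} : Set E) | x ∈ G.ends f} = {e} := by
    ext f
    simp +contextual [h]
  have hloop : {f ∈ ({e} : Set E) | G.ends f = s(x, x)} = ∅ := by
    ext f
    simp +contextual [h, Ne.symm hxy]
  rw [deg, hinc, hloop, ncard_singleton, ncard_empty]

lemma deg_singleton_right {e : E} {x y : V} (h : G.ends e = s(x, y)) (hxy : x ≠ y) :
    deg G {e} y = 1 :=
  deg_singleton_left (h.trans Sym2.eq_swap) hxy.symm

section Degree

variable [Finite E]

lemma deg_mono {X Y : Set E} (h : X ⊆ Y) (v : V) : deg G X v ≤ deg G Y v :=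
  add_le_add (ncard_le_ncard fun _ he => ⟨h he.1, he.2⟩)
    (ncard_le_ncard fun _ he => ⟨h he.1, he.2⟩)

lemma ncard_sep_eq_add_ncard_sep_sdiff {X A : Set E} (h : A ⊆ X) (p : E → Prop) :
    {e ∈ X | p e}.ncard = {e ∈ A | p e}.ncard + {e ∈ X \ A | p e}.ncard := by
  rw [← ncard_inter_add_ncard_sdiff_eq_ncard {e ∈ X | p e} A]
  congr 2 <;> ext e <;> simp only [mem_inter_iff, mem_sdiff, mem_ofPred_eq]
  · exact ⟨fun h' => ⟨h'.2, h'.1.2⟩, fun h' => ⟨⟨h h'.1, h'.2⟩, h'.1⟩⟩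
  · tauto

lemma deg_eq_add_deg_sdiff {X A : Set E} (h : A ⊆ X) (v : V) :
    deg G X v = deg G A v + deg G (X \ A) v := by
  simp only [deg, ncard_sep_eq_add_ncard_sep_sdiff h]
  ring

lemma deg_union_of_disjoint {A B : Set E} (h : Disjoint A B) (v : V) :
    deg G (A ∪ B) v = deg G A v + deg G B v := by
  rw [deg_eq_add_deg_sdiff subset_union_left,
    union_sdiff_cancel_left (Set.disjoint_iff.1 h)]

lemma deg_pos_iff {X : Set E} {v : V} : 0 < deg G X v ↔ v ∈ VX G X := by
  have hloops : {e ∈ X | G.ends e = s(v, v)} ⊆ {e ∈ X | v ∈ G.ends e} :=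
    fun e he => ⟨he.1, he.2 ▸ Sym2.mem_mk_left v v⟩
  have hpos : v ∈ VX G X ↔ 0 < {e ∈ X | v ∈ G.ends e}.ncard := (ncard_pos (toFinite _)).symm
  have := ncard_le_ncard hloops
  rw [deg, hpos]
  omega

lemma deg_eq_zero {X : Set E} {v : V} (h : v ∉ VX G X) : deg G X v = 0 :=
  Nat.eq_zero_of_not_pos (mt deg_pos_iff.1 h)

lemma two_le_deg_of_loop {X : Set E} {e : E} {v : V} (he : e ∈ X) (hv : G.ends e = s(v, v)) :
    2 ≤ deg G X v := by
  have h₁ : 0 < {e ∈ X | v ∈ G.ends e}.ncard :=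
    (ncard_pos (toFinite _)).2 ⟨e, he, hv ▸ Sym2.mem_mk_left v v⟩
  have h₂ : 0 < {e ∈ X | G.ends e = s(v, v)}.ncard := (ncard_pos (toFinite _)).2 ⟨e, he, hv⟩
  rw [deg]
  omega

lemma two_le_deg_of_ne {X : Set E} {e f : E} {v : V} (he : e ∈ X) (hf : f ∈ X) (hef : e ≠ f)
    (hve : v ∈ G.ends e) (hvf : v ∈ G.ends f) : 2 ≤ deg G X v := by
  have : ({e, f} : Set E) ⊆ {e ∈ X | v ∈ G.ends e} := by
    rintro x (rfl | rfl)
    exacts [⟨he, hve⟩, ⟨hf, hvf⟩]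
  have := ncard_le_ncard this
  rw [ncard_pair hef] at this
  exact le_add_right this

lemma exists_unique_edge_of_deg_eq_one {X : Set E} {v : V} (h : deg G X v = 1) :
    ∃ e ∈ X, ∃ u, u ≠ v ∧ G.ends e = s(v, u) ∧ ∀ f ∈ X, v ∈ G.ends f → f = e := by
  obtain ⟨e, he, hve⟩ := deg_pos_iff.1 (h ▸ Nat.one_pos)
  obtain ⟨u, hu⟩ := Sym2.mem_iff_exists.1 hve
  refine ⟨e, he, u, fun huv => ?_, hu, fun f hf hvf => ?_⟩
  · have := two_le_deg_of_loop he (huv ▸ hu)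
    omega
  · by_contra hfe
    have := two_le_deg_of_ne hf he hfe hvf hve
    omega

lemma deg_singleton_eq_zero {e : E} {x y z : V} (h : G.ends e = s(x, y)) (hx : z ≠ x)
    (hy : z ≠ y) : deg G {e} z = 0 :=
  deg_eq_zero (by simp [VX_singleton h, hx, hy])

end Degree

section Handshake

open scoped Classical

variable [Finite E]

lemma sum_incidences_eq_two {S : Finset V} {x y : V} (hx : x ∈ S) (hy : y ∈ S) :
    ∑ v ∈ S, ((if v ∈ s(x, y) then 1 else 0) + (if s(x, y) = s(v, v) then 1 else 0)) = 2 := by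
  rw [Finset.sum_add_distrib, Finset.sum_boole, Finset.sum_boole]
  by_cases hxy : x = y
  · subst hxy
    have h₁ : S.filter (· ∈ s(x, x)) = {x} := by ext; simp +contextual [hx]
    have h₂ : S.filter (fun v => s(x, x) = s(v, v)) = {x} := by
      ext v; simp only [Finset.mem_filter, Sym2.eq_iff, Finset.mem_singleton]; aesop
    rw [h₁, h₂, Finset.card_singleton]; rfl
  · have h₁ : S.filter (· ∈ s(x, y)) = {x, y} := by ext; aesop
    have h₂ : S.filter (fun v => s(x, y) = s(v, v)) = ∅ := by
      ext v; simp only [Finset.mem_filter, Sym2.eq_iff]; aesop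
    rw [h₁, h₂, Finset.card_pair hxy, Finset.card_empty]; rfl

lemma sum_deg_eq_two_mul_ncard (X : Set E) :
    ∑ v ∈ (toFinite (VX G X)).toFinset, deg G X v = 2 * X.ncard := by
  set S := (toFinite (VX G X)).toFinset
  have hdeg : ∀ v, deg G X v = ∑ e ∈ (toFinite X).toFinset,
      ((if v ∈ G.ends e then 1 else 0) + (if G.ends e = s(v, v) then 1 else 0)) := by
    intro v
    rw [Finset.sum_add_distrib, Finset.sum_boole, Finset.sum_boole, deg,
      ncard_eq_toFinset_card _ (toFinite _), ncard_eq_toFinset_card _ (toFinite _)]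
    congr 2 <;> ext <;> simp
  rw [Finset.sum_congr rfl fun v _ => hdeg v, Finset.sum_comm,
    ncard_eq_toFinset_card X (toFinite X), mul_comm, ← smul_eq_mul, ← Finset.sum_const]
  refine Finset.sum_congr rfl fun e he => ?_
  obtain ⟨x, y, h⟩ := exists_ends_eq G e
  have hmem : ∀ z ∈ G.ends e, z ∈ S := fun z hz =>
    (Finite.mem_toFinset _).2 ⟨e, (Finite.mem_toFinset _).1 he, hz⟩
  rw [h] at hmem ⊢
  exact sum_incidences_eq_two (hmem x (Sym2.mem_mk_left x y)) (hmem y (Sym2.mem_mk_right x y))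

lemma sum_deg_sub_two_add_two_mul_ncard_VX {X : Set E} (h : ∀ v ∈ VX G X, 2 ≤ deg G X v) :
    ∑ v ∈ (toFinite (VX G X)).toFinset, (deg G X v - 2) + 2 * (VX G X).ncard = 2 * X.ncard := by
  have h' : ∀ v ∈ (toFinite (VX G X)).toFinset, 2 ≤ deg G X v :=
    fun v hv => h v ((Finite.mem_toFinset _).1 hv)
  have hle := Finset.sum_le_sum h'
  rw [Finset.sum_tsub_distrib _ h', sum_deg_eq_two_mul_ncard]
  rw [sum_deg_eq_two_mul_ncard, Finset.sum_const, smul_eq_mul,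
    ← ncard_eq_toFinset_card _ (toFinite _)] at hle
  rw [Finset.sum_const, smul_eq_mul, ← ncard_eq_toFinset_card _ (toFinite _)]
  omega

lemma ncard_VX_lt_of_two_le_deg {X : Set E} (h : ∀ v ∈ VX G X, 2 ≤ deg G X v) {z : V}
    (hz : z ∈ VX G X) (hz3 : 3 ≤ deg G X z) : (VX G X).ncard < X.ncard := by
  have := sum_deg_sub_two_add_two_mul_ncard_VX h
  have := Finset.single_le_sum (f := fun v => deg G X v - 2) (fun _ _ => Nat.zero_le _)
    ((Finite.mem_toFinset (toFinite (VX G X))).2 hz)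
  omega

lemma IsCycle.ncard_VX {C : Set E} (hC : IsCycle G C) : (VX G C).ncard = C.ncard := by
  have := sum_deg_sub_two_add_two_mul_ncard_VX fun v hv => (hC.2.2 v hv).ge
  rw [Finset.sum_eq_zero fun v hv => by
    rw [hC.2.2 v ((Finite.mem_toFinset _).1 hv), Nat.sub_self]] at this
  omega

lemma even_ncard_odd_deg (X : Set E) : Even {v ∈ VX G X | Odd (deg G X v)}.ncard := by
  have heven : Even (∑ v ∈ (toFinite (VX G X)).toFinset, deg G X v) := by
    rw [sum_deg_eq_two_mul_ncard]
    exact even_two_mul _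
  rw [Finset.even_sum_iff_even_card_odd] at heven
  convert heven using 1
  rw [← ncard_coe_finset]
  congr 1
  ext v
  simp

end Handshake

section Connectivity

open Relation

lemma EAdj.symm {X : Set E} {a b : E} (h : EAdj G X a b) : EAdj G X b a :=
  ⟨h.2.1, h.1, h.2.2.imp fun _ hv => ⟨hv.2, hv.1⟩⟩

lemma EAdj.mono {X Y : Set E} (h : X ⊆ Y) {a b : E} (hab : EAdj G X a b) : EAdj G Y a b :=
  ⟨h hab.1, h hab.2.1, hab.2.2⟩

instance (X : Set E) : Std.Symm (EAdj G X) := ⟨fun _ _ => EAdj.symm⟩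

lemma reflTransGen_EAdj_symm {X : Set E} {a b : E} (h : ReflTransGen (EAdj G X) a b) :
    ReflTransGen (EAdj G X) b a :=
  Std.Symm.symm _ _ h

lemma reflTransGen_EAdj_mono {X Y : Set E} (h : X ⊆ Y) {a b : E}
    (hab : ReflTransGen (EAdj G X) a b) : ReflTransGen (EAdj G Y) a b :=
  ReflTransGen.mono (fun _ _ => EAdj.mono h) _ _ hab

lemma connOn_singleton (e : E) : ConnOn G {e} := by
  rintro a rfl b rfl
  exact ReflTransGen.refl

lemma ConnOn.union {P Q : Set E} (hP : ConnOn G P) (hQ : ConnOn G Q) {z : V}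
    (hzP : z ∈ VX G P) (hzQ : z ∈ VX G Q) : ConnOn G (P ∪ Q) := by
  obtain ⟨p, hp, hzp⟩ := hzP
  obtain ⟨q, hq, hzq⟩ := hzQ
  have hpq : ReflTransGen (EAdj G (P ∪ Q)) p q := .single ⟨.inl hp, .inr hq, z, hzp, hzq⟩
  have toP : ∀ a ∈ P, ReflTransGen (EAdj G (P ∪ Q)) a p :=
    fun a ha => reflTransGen_EAdj_mono subset_union_left (hP a ha p hp)
  have toQ : ∀ a ∈ Q, ReflTransGen (EAdj G (P ∪ Q)) q a :=
    fun a ha => reflTransGen_EAdj_mono subset_union_right (hQ q hq a ha)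
  rintro a (ha | ha) b (hb | hb)
  · exact reflTransGen_EAdj_mono subset_union_left (hP a ha b hb)
  · exact ((toP a ha).trans hpq).trans (toQ b hb)
  · exact reflTransGen_EAdj_symm (((toP b hb).trans hpq).trans (toQ a ha))
  · exact reflTransGen_EAdj_mono subset_union_right (hQ a ha b hb)

lemma ConnOn.sdiff_singleton {X : Set E} {e : E} (hX : ConnOn G X)
    (hbypass : ∀ f ∈ X \ {e}, ∀ g ∈ X \ {e}, EAdj G X f e → EAdj G X e g →
      ReflTransGen (EAdj G (X \ {e})) f g) : ConnOn G (X \ {e}) := by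
  rintro a ⟨ha, hae⟩ b ⟨hb, hbe⟩
  suffices key : ∀ x, ReflTransGen (EAdj G X) x b →
      (x ≠ e → ReflTransGen (EAdj G (X \ {e})) x b) ∧
      (x = e → ∃ g ∈ X \ {e}, EAdj G X e g ∧ ReflTransGen (EAdj G (X \ {e})) g b) from
    (key a (hX a ha b hb)).1 hae
  intro x hx
  induction hx using ReflTransGen.head_induction_on with
  | refl => exact ⟨fun _ => .refl, fun h => absurd h hbe⟩
  | @head x y hxy _ ih =>
    by_cases hye : y = e
    · obtain ⟨g, hg, heg, hgb⟩ := ih.2 hye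
      refine ⟨fun hxe => (hbypass x ⟨hxy.1, hxe⟩ g hg (hye ▸ hxy) heg).trans hgb, fun hxe => ?_⟩
      subst hxe hye
      exact ih.2 rfl
    · exact ⟨fun hxe => .head ⟨⟨hxy.1, hxe⟩, ⟨hxy.2.1, hye⟩, hxy.2.2⟩ (ih.1 hye),
        fun hxe => ⟨y, ⟨hxy.2.1, hye⟩, hxe ▸ hxy, ih.1 hye⟩⟩

lemma ConnOn.sdiff_singleton_of_deg_eq_one [Finite E] {X : Set E} (hX : ConnOn G X) {e : E}
    {w : V} (hw : w ∈ G.ends e) (hdeg : deg G X w = 1) : ConnOn G (X \ {e}) := by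
  obtain ⟨e', -, u, -, hends, huniq⟩ := exists_unique_edge_of_deg_eq_one hdeg
  refine hX.sdiff_singleton fun f hf g hg hfe heg => ?_
  have he : e = e' := huniq e hfe.2.1 hw
  have at_u : ∀ h ∈ X \ {e}, ∀ x ∈ G.ends e, x ∈ G.ends h → x = u := by
    intro h hh x hxe hxh
    rw [he, hends] at hxe
    rcases Sym2.mem_iff.1 hxe with rfl | rfl
    · exact absurd ((huniq h hh.1 hxh).trans he.symm) hh.2
    · rfl
  obtain ⟨x, hxf, hxe⟩ := hfe.2.2
  obtain ⟨y, hye, hyg⟩ := heg.2.2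
  exact .single ⟨hf, hg, u, at_u f hf x hxe hxf ▸ hxf, at_u g hg y hye hyg ▸ hyg⟩

def component (G : MGraph V E) (Y : Set E) (a : E) : Set E := {b ∈ Y | ReflTransGen (EAdj G Y) a b}

lemma component_subset {Y : Set E} {a : E} : component G Y a ⊆ Y := fun _ hb => hb.1

lemma mem_component_self {Y : Set E} {a : E} (ha : a ∈ Y) : a ∈ component G Y a := ⟨ha, .refl⟩

lemma mem_component_of_EAdj {Y : Set E} {a b c : E} (hb : b ∈ component G Y a)
    (hbc : EAdj G Y b c) :
    c ∈ component G Y a :=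
  ⟨hbc.2.1, hb.2.tail hbc⟩

lemma reflTransGen_EAdj_component {Y : Set E} {a b : E} (hab : ReflTransGen (EAdj G Y) a b) :
    ReflTransGen (EAdj G (component G Y a)) a b := by
  induction hab with
  | refl => exact .refl
  | @tail b c hab hbc ih =>
    exact ih.tail ⟨⟨hbc.1, hab⟩, mem_component_of_EAdj ⟨hbc.1, hab⟩ hbc, hbc.2.2⟩

lemma connOn_component {Y : Set E} {a : E} : ConnOn G (component G Y a) := fun _ hb _ hc =>
  (reflTransGen_EAdj_symm (reflTransGen_EAdj_component hb.2)).trans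
    (reflTransGen_EAdj_component hc.2)

lemma deg_component [Finite E] {Y : Set E} {a : E} {z : V} (hz : z ∈ VX G (component G Y a)) :
    deg G (component G Y a) z = deg G Y z := by
  obtain ⟨g, hg, hzg⟩ := hz
  have hmem : ∀ f ∈ Y, z ∈ G.ends f → f ∈ component G Y a :=
    fun f hf hzf => mem_component_of_EAdj hg ⟨hg.1, hf, z, hzg, hzf⟩
  unfold deg
  congr 2 <;> ext f
  · exact ⟨fun h => ⟨h.1.1, h.2⟩, fun h => ⟨hmem f h.1 h.2, h.2⟩⟩
  · exact ⟨fun h => ⟨h.1.1, h.2⟩, fun h => ⟨hmem f h.1 (h.2 ▸ Sym2.mem_mk_left z z), h.2⟩⟩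

lemma connOn_of_forall_mem_VX_component {Y : Set E} {w : V}
    (h : ∀ a ∈ Y, w ∈ VX G (component G Y a)) : ConnOn G Y := by
  intro a ha b hb
  obtain ⟨f, hf, hwf⟩ := h a ha
  obtain ⟨g, hg, hwg⟩ := h b hb
  exact (hf.2.tail ⟨hf.1, hg.1, w, hwf, hwg⟩).trans (reflTransGen_EAdj_symm hg.2)

lemma ConnOn.exists_mem_VX_component_sdiff {X A : Set E} (hX : ConnOn G X) (hAX : A ⊆ X)
    (hA : A.Nonempty) {a : E} (ha : a ∈ X \ A) :
    ∃ z ∈ VX G A, z ∈ VX G (component G (X \ A) a) := by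
  obtain ⟨b, hb⟩ := hA
  suffices key : ∀ x, ReflTransGen (EAdj G X) x b → x ∉ A →
      ∃ f ∈ X \ A, ∃ z ∈ G.ends f, z ∈ VX G A ∧ ReflTransGen (EAdj G (X \ A)) x f by
    obtain ⟨f, hf, z, hzf, hzA, haf⟩ := key a (hX a ha.1 b (hAX hb)) ha.2
    exact ⟨z, hzA, f, ⟨hf, haf⟩, hzf⟩
  intro x hx
  induction hx using ReflTransGen.head_induction_on with
  | refl => exact fun hbA => absurd hb hbA
  | @head x y hxy _ ih =>
    intro hxA
    by_cases hyA : y ∈ A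
    · obtain ⟨z, hzx, hzy⟩ := hxy.2.2
      exact ⟨x, ⟨hxy.1, hxA⟩, z, hzx, ⟨y, hyA, hzy⟩, .refl⟩
    · obtain ⟨f, hf, z, hzf, hzA, hyf⟩ := ih hyA
      exact ⟨f, hf, z, hzf, hzA, .head ⟨⟨hxy.1, hxA⟩, ⟨hxy.2.1, hyA⟩, hxy.2.2⟩ hyf⟩

lemma mem_VX_component_of_odd_deg [Finite E] {Y : Set E} {a : E} {u t z : V}
    (hodd : ∀ v ∈ VX G Y, Odd (deg G Y v) → v = u ∨ v = t)
    (hz : z ∈ VX G (component G Y a)) (hzo : Odd (deg G Y z)) : u ∈ VX G (component G Y a) := by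
  -- otherwise `z` would be the only odd-degree vertex of the component
  by_contra hu
  set O := {v ∈ VX G (component G Y a) | Odd (deg G (component G Y a) v)}
  have hOt : O ⊆ {t} := fun v hv =>
    (hodd v (VX_mono component_subset hv.1) (deg_component hv.1 ▸ hv.2)).resolve_left
      fun hvu => hu (hvu ▸ hv.1)
  have hO1 : O.ncard ≤ 1 := (ncard_le_ncard hOt).trans (ncard_singleton t).le
  have hO0 : 0 < O.ncard := (ncard_pos (toFinite _)).2 ⟨z, hz, (deg_component hz).symm ▸ hzo⟩
  obtain ⟨k, hk⟩ : Even O.ncard := even_ncard_odd_deg _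
  omega

end Connectivity

section Cycles

lemma IsPathBtw.symm {P : Set E} {u v : V} (h : IsPathBtw G P u v) : IsPathBtw G P v u :=
  ⟨h.1, h.2.1, h.2.2.1, h.2.2.2.1.symm, h.2.2.2.2.2.1, h.2.2.2.2.1, h.2.2.2.2.2.2⟩

lemma IsCycle.sdiff_nonempty {X C : Set E} (hC : IsCycle G C) (hCX : C ⊆ X) {z : V}
    (hz : z ∈ VX G X) (hz2 : deg G X z ≠ 2) : (X \ C).Nonempty := by
  rw [nonempty_iff_ne_empty, Ne, sdiff_eq_empty]
  intro hXC
  obtain rfl := subset_antisymm hCX hXC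
  exact hz2 (hC.2.2 z hz)

variable [Finite E]

lemma isCycle_component {Y : Set E} {a : E} (ha : a ∈ Y)
    (h : ∀ z ∈ VX G (component G Y a), deg G Y z = 2) : IsCycle G (component G Y a) :=
  ⟨⟨a, mem_component_self ha⟩, connOn_component, fun z hz => (deg_component hz).trans (h z hz)⟩

lemma deg_sdiff_of_notMem_VX {X A : Set E} (hAX : A ⊆ X) {z : V} (hz : z ∉ VX G A) :
    deg G (X \ A) z = deg G X z := by
  rw [deg_eq_add_deg_sdiff hAX, deg_eq_zero hz, zero_add]

lemma IsCycle.deg_sdiff_add_two {X C : Set E} (hC : IsCycle G C) (hCX : C ⊆ X) {z : V}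
    (hz : z ∈ VX G C) : deg G (X \ C) z + 2 = deg G X z := by
  rw [deg_eq_add_deg_sdiff hCX, hC.2.2 z hz, add_comm]

lemma three_le_deg_of_mem_VX_sdiff {X C : Set E} (hC : IsCycle G C) (hCX : C ⊆ X) {z : V}
    (hzC : z ∈ VX G C) (hz : z ∈ VX G (X \ C)) : 3 ≤ deg G X z := by
  have := deg_pos_iff.2 hz
  have := hC.deg_sdiff_add_two hCX hzC
  omega

lemma exists_three_le_deg_mem_VX_component {X C : Set E} (hX : ConnOn G X) (hC : IsCycle G C)
    (hCX : C ⊆ X) {a : E} (ha : a ∈ X \ C) :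
    ∃ z ∈ VX G C, z ∈ VX G (component G (X \ C) a) ∧ 3 ≤ deg G X z := by
  obtain ⟨z, hzC, hz⟩ := hX.exists_mem_VX_component_sdiff hCX hC.1 ha
  exact ⟨z, hzC, hz, three_le_deg_of_mem_VX_sdiff hC hCX hzC (VX_mono component_subset hz)⟩

lemma IsCycle.mem_VX_component_sdiff {X C : Set E} (hC : IsCycle G C) (hX : ConnOn G X)
    (hCX : C ⊆ X) {w : V} (hw : ∀ z ∈ VX G C, 3 ≤ deg G X z → z = w) {a : E} (ha : a ∈ X \ C) :
    w ∈ VX G C ∧ w ∈ VX G (component G (X \ C) a) := by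
  obtain ⟨z, hzC, hz, hz3⟩ := exists_three_le_deg_mem_VX_component hX hC hCX ha
  obtain rfl := hw z hzC hz3
  exact ⟨hzC, hz⟩

lemma exists_three_le_deg_of_isCycle {X C : Set E} (hX : ConnOn G X) (hC : IsCycle G C)
    (hCX : C ⊆ X) (hne : C ≠ X) : ∃ z ∈ VX G C, 3 ≤ deg G X z := by
  obtain ⟨a, haX, haC⟩ := nonempty_of_ssubset (hCX.ssubset_of_ne hne)
  obtain ⟨z, hzC, -, hz⟩ := exists_three_le_deg_mem_VX_component hX hC hCX ⟨haX, haC⟩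
  exact ⟨z, hzC, hz⟩

lemma IsCycle.eq_of_subset {C D : Set E} (hC : IsCycle G C) (hD : IsCycle G D) (h : D ⊆ C) :
    D = C := by
  by_contra hne
  obtain ⟨z, hz, h3⟩ := exists_three_le_deg_of_isCycle hC.2.1 hD h hne
  have := hC.2.2 z (VX_mono h hz)
  omega

lemma IsCycle.eq_singleton_of_loop {C : Set E} {e : E} {u : V} (hC : IsCycle G C)
    (he : e ∈ C) (h : G.ends e = s(u, u)) : C = {e} := by
  refine (hC.eq_of_subset ⟨singleton_nonempty e, connOn_singleton e, fun z hz => ?_⟩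
    (singleton_subset_iff.2 he)).symm
  rw [VX_singleton h, pair_eq_singleton, mem_singleton_iff] at hz
  subst hz
  have := deg_mono (G := G) (singleton_subset_iff.2 he) z
  have := two_le_deg_of_loop (mem_singleton e) h
  have := hC.2.2 z ⟨e, he, h ▸ Sym2.mem_mk_left z z⟩
  omega

lemma isPathBtw_of_deg {P : Set E} {u v : V} (hne : P.Nonempty) (hconn : ConnOn G P)
    (hle : ∀ w ∈ VX G P, deg G P w ≤ 2) (hu : deg G P u = 1) (hv : deg G P v = 1)
    (huv : u ≠ v) : IsPathBtw G P u v := by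
  refine ⟨hne, hconn, fun C hCP hC => ?_, huv, hu, hv, hle⟩
  by_cases hCeq : C = P
  · subst hCeq
    have := hC.2.2 u (deg_pos_iff.1 (by omega))
    omega
  · obtain ⟨z, hzC, hz3⟩ := exists_three_le_deg_of_isCycle hconn hC hCP hCeq
    have := hle z (VX_mono hCP hzC)
    omega

lemma IsPathBtw.left_mem_VX {P : Set E} {u v : V} (h : IsPathBtw G P u v) : u ∈ VX G P :=
  deg_pos_iff.1 (by rw [h.2.2.2.2.1]; exact Nat.one_pos)

lemma IsPathBtw.right_mem_VX {P : Set E} {u v : V} (h : IsPathBtw G P u v) : v ∈ VX G P :=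
  h.symm.left_mem_VX

lemma isPathBtw_singleton {e : E} {x y : V} (h : G.ends e = s(x, y)) (hxy : x ≠ y) :
    IsPathBtw G {e} x y := by
  refine isPathBtw_of_deg (singleton_nonempty e) (connOn_singleton e) (fun w hw => ?_)
    (deg_singleton_left h hxy) (deg_singleton_right h hxy) hxy
  rw [VX_singleton h] at hw
  rcases hw with rfl | rfl
  · rw [deg_singleton_left h hxy]; omega
  · rw [deg_singleton_right h hxy]; omega

lemma IsCycle.isPathBtw_sdiff_singleton {C : Set E} {e : E} {x y : V} (hC : IsCycle G C)
    (he : e ∈ C) (h : G.ends e = s(x, y)) (hxy : x ≠ y) : IsPathBtw G (C \ {e}) x y := by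
  have hdeg : ∀ z ∈ VX G C, deg G {e} z + deg G (C \ {e}) z = 2 := fun z hz =>
    (deg_eq_add_deg_sdiff (singleton_subset_iff.2 he) z).symm.trans (hC.2.2 z hz)
  have hx : deg G (C \ {e}) x = 1 := by
    have := hdeg x ⟨e, he, h ▸ Sym2.mem_mk_left x y⟩
    rw [deg_singleton_left h hxy] at this
    omega
  have hy : deg G (C \ {e}) y = 1 := by
    have := hdeg y ⟨e, he, h ▸ Sym2.mem_mk_right x y⟩
    rw [deg_singleton_right h hxy] at this
    omega
  have hVX : ∀ {z}, z ∈ VX G (C \ {e}) → z ∈ VX G C := fun hz => VX_mono sdiff_subset hz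
  have hodd : ∀ z ∈ VX G (C \ {e}), Odd (deg G (C \ {e}) z) → z = x ∨ z = y := by
    intro z hz hzo
    by_contra! hne
    have := hdeg z (hVX hz)
    rw [deg_singleton_eq_zero h hne.1 hne.2, zero_add] at this
    exact Nat.not_odd_iff_even.2 (this ▸ even_two) hzo
  -- no component of `C \ {e}` is a cycle, so each has a vertex of odd degree
  have hcomp : ∀ a ∈ C \ {e}, x ∈ VX G (component G (C \ {e}) a) := by
    intro a ha
    have hnc : ¬ IsCycle G (component G (C \ {e}) a) := fun hK =>
      (component_subset (hC.eq_of_subset hK (component_subset.trans sdiff_subset) ▸ he)).2 rfl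
    obtain ⟨z, hz, hz2⟩ : ∃ z ∈ VX G (component G (C \ {e}) a), deg G (C \ {e}) z ≠ 2 := by
      by_contra! h2
      exact hnc (isCycle_component ha h2)
    refine mem_VX_component_of_odd_deg hodd hz ?_
    have h1 := deg_pos_iff.2 (VX_mono component_subset hz)
    have h2 := hdeg z (hVX (VX_mono component_subset hz))
    rw [show deg G (C \ {e}) z = 1 by omega]
    exact odd_one
  exact isPathBtw_of_deg (nonempty_of_mem_VX (deg_pos_iff.1 (hx ▸ Nat.one_pos)))
    (connOn_of_forall_mem_VX_component hcomp)
    (fun z hz => by have := hdeg z (hVX hz); omega) hx hy hxy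

lemma ConnOn.sdiff_singleton_of_mem_isCycle {X C : Set E} (hX : ConnOn G X) (hC : IsCycle G C)
    (hCX : C ⊆ X) {e : E} (he : e ∈ C) : ConnOn G (X \ {e}) := by
  refine hX.sdiff_singleton fun f hf g hg hfe heg => ?_
  obtain ⟨p, hpf, hpe⟩ := hfe.2.2
  obtain ⟨q, hqe, hqg⟩ := heg.2.2
  by_cases hpq : p = q
  · subst hpq
    exact .single ⟨hf, hg, p, hpf, hqg⟩
  have hW := hC.isPathBtw_sdiff_singleton he ((Sym2.mem_and_mem_iff hpq).1 ⟨hpe, hqe⟩) hpq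
  obtain ⟨f', hf', hpf'⟩ := hW.left_mem_VX
  obtain ⟨g', hg', hqg'⟩ := hW.right_mem_VX
  have hWX : C \ {e} ⊆ X \ {e} := sdiff_subset_sdiff_left hCX
  exact (Relation.ReflTransGen.single ⟨hf, hWX hf', p, hpf, hpf'⟩).trans
    ((reflTransGen_EAdj_mono hWX (hW.2.1 f' hf' g' hg')).tail ⟨hWX hg', hg, q, hqg', hqg⟩)

lemma exists_isCycle_subset_of_ncard_VX_le {Y : Set E} (hne : Y.Nonempty)
    (hcard : (VX G Y).ncard ≤ Y.ncard) : ∃ C ⊆ Y, IsCycle G C := by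
  induction hn : Y.ncard using Nat.strong_induction_on generalizing Y with
  | _ n ih =>
  by_cases hcyc : ∀ v ∈ VX G Y, deg G Y v = 2
  · obtain ⟨a, ha⟩ := hne
    exact ⟨component G Y a, component_subset,
      isCycle_component ha fun z hz => hcyc z (VX_mono component_subset hz)⟩
  -- otherwise delete the edge at a leaf, or any edge if `|VX G Y| < |Y|`
  obtain ⟨e, he, hcard', hY2⟩ :
      ∃ e ∈ Y, (VX G (Y \ {e})).ncard + 1 ≤ Y.ncard ∧ 2 ≤ Y.ncard := by
    by_cases h1 : ∃ v, deg G Y v = 1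
    · obtain ⟨v, hv⟩ := h1
      obtain ⟨e, he, u, huv, hends, huniq⟩ := exists_unique_edge_of_deg_eq_one hv
      have hpair : ({v, u} : Set V) ⊆ VX G Y := by
        rw [← VX_singleton hends]
        exact VX_mono (singleton_subset_iff.2 he)
      have := ncard_le_ncard hpair
      rw [ncard_pair huv.symm] at this
      have hsub : VX G (Y \ {e}) ⊆ VX G Y \ {v} := fun w ⟨f, hf, hwf⟩ =>
        ⟨⟨f, hf.1, hwf⟩, fun hwv => hf.2 (huniq f hf.1 (hwv ▸ hwf))⟩
      have := ncard_le_ncard hsub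
      have := ncard_sdiff_singleton_add_one (deg_pos_iff.1 (hv ▸ Nat.one_pos))
      exact ⟨e, he, by omega⟩
    · push Not at h1 hcyc
      have h2 : ∀ v ∈ VX G Y, 2 ≤ deg G Y v := fun v hv => by
        have := deg_pos_iff.2 hv; have := h1 v; omega
      obtain ⟨z, hz, hz2⟩ := hcyc
      have hlt := ncard_VX_lt_of_two_le_deg h2 hz (by have := h2 z hz; omega)
      have := (ncard_pos (toFinite _)).2 ⟨z, hz⟩
      obtain ⟨e, he⟩ := hne
      exact ⟨e, he, (ncard_le_ncard (VX_mono sdiff_subset)).trans_lt hlt, by omega⟩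
  have hYe := ncard_sdiff_singleton_add_one he
  obtain ⟨C, hCY, hC⟩ :=
    ih _ (by omega) (Y := Y \ {e}) (nonempty_of_ncard_ne_zero (by omega)) (by omega) rfl
  exact ⟨C, hCY.trans sdiff_subset, hC⟩

lemma twoCycles_of_ncard_VX_lt {Y : Set E} (h : (VX G Y).ncard < Y.ncard) : TwoCycles G Y := by
  obtain ⟨C₁, hC₁Y, hC₁⟩ :=
    exists_isCycle_subset_of_ncard_VX_le (nonempty_of_ncard_ne_zero (by omega)) h.le
  obtain ⟨e, he⟩ := hC₁.1
  have hYe := ncard_sdiff_singleton_add_one (hC₁Y he)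
  have := ncard_le_ncard (VX_mono (G := G) (sdiff_subset : Y \ {e} ⊆ Y))
  obtain ⟨x, y, hxy⟩ := exists_ends_eq G e
  have : 0 < (VX G Y).ncard :=
    (ncard_pos (toFinite _)).2 ⟨x, e, hC₁Y he, hxy ▸ Sym2.mem_mk_left x y⟩
  obtain ⟨C₂, hC₂Y, hC₂⟩ :=
    exists_isCycle_subset_of_ncard_VX_le (G := G) (Y := Y \ {e})
      (nonempty_of_ncard_ne_zero (by omega)) (by omega)
  exact ⟨C₁, C₂, hC₁Y, hC₂Y.trans sdiff_subset, hC₁, hC₂, fun h => (hC₂Y (h ▸ he)).2 rfl⟩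

end Cycles

section Paths

lemma VX_insert {A : Set E} {e : E} {x y : V} (h : G.ends e = s(x, y)) :
    VX G (insert e A) = {x, y} ∪ VX G A := by
  rw [insert_eq, VX_union, VX_singleton h]

variable [Finite E]

lemma IsPathBtw.insert_left {P : Set E} {e : E} {u u' t : V} (hP : IsPathBtw G P u' t)
    (he : G.ends e = s(u, u')) (hu : u ∉ VX G P) : IsPathBtw G (insert e P) u t := by
  have hu'P := hP.left_mem_VX
  have htP := hP.right_mem_VX
  have huu' : u ≠ u' := fun h => hu (h ▸ hu'P)
  have hut : u ≠ t := fun h => hu (h ▸ htP)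
  have hdeg : ∀ z, deg G (insert e P) z = deg G {e} z + deg G P z := by
    rw [insert_eq]
    exact deg_union_of_disjoint
      (disjoint_singleton_left.2 fun heP => hu ⟨e, heP, he ▸ Sym2.mem_mk_left u u'⟩)
  have hle : ∀ z, deg G (insert e P) z ≤ 2 := by
    intro z
    rw [hdeg]
    by_cases hzu : z = u
    · rw [hzu, deg_eq_zero hu, deg_singleton_left he huu']
      omega
    by_cases hzu' : z = u'
    · rw [hzu', hP.2.2.2.2.1, deg_singleton_right he huu']
    rw [deg_singleton_eq_zero he hzu hzu', zero_add]
    by_cases hzP : z ∈ VX G P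
    · exact hP.2.2.2.2.2.2 z hzP
    · rw [deg_eq_zero hzP]
      omega
  refine isPathBtw_of_deg ⟨e, mem_insert e P⟩ ?_ (fun z _ => hle z) ?_ ?_ hut
  · rw [insert_eq]
    exact (connOn_singleton e).union hP.2.1 (by rw [VX_singleton he]; simp) hu'P
  · rw [hdeg, deg_eq_zero hu, deg_singleton_left he huu']
  · rw [hdeg, deg_singleton_eq_zero he hut.symm hP.2.2.2.1.symm, hP.2.2.2.2.2.1]

lemma IsPathBtw.eq_singleton_of_ends_eq {P : Set E} {u t : V} (hP : IsPathBtw G P u t)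
    (hint : ∀ z ∈ VX G P, z ≠ u → z ≠ t → deg G P z = 2) {e : E} (he : e ∈ P)
    (h : G.ends e = s(u, t)) : P = {e} := by
  -- otherwise every vertex of `P \ {e}` has degree `2`, giving a cycle inside `P`
  by_contra hne
  obtain ⟨a, haP, hae⟩ :=
    nonempty_of_ssubset ((singleton_subset_iff.2 he).ssubset_of_ne (Ne.symm hne))
  have hsplit := deg_eq_add_deg_sdiff (G := G) (singleton_subset_iff.2 he)
  have hend : ∀ z, z = u ∨ z = t → z ∉ VX G (P \ {e}) := by
    rintro z hz hzW
    have := deg_pos_iff.2 hzW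
    rcases hz with rfl | rfl
    · have := hsplit z
      rw [hP.2.2.2.2.1, deg_singleton_left h hP.2.2.2.1] at this
      omega
    · have := hsplit z
      rw [hP.2.2.2.2.2.1, deg_singleton_right h hP.2.2.2.1] at this
      omega
  refine hP.2.2.1 _ (component_subset.trans sdiff_subset)
    (isCycle_component ⟨haP, hae⟩ fun z hz => ?_)
  have hzW := VX_mono component_subset hz
  have hzu : z ≠ u := fun h' => hend z (.inl h') hzW
  have hzt : z ≠ t := fun h' => hend z (.inr h') hzW
  rw [← hint z (VX_mono sdiff_subset hzW) hzu hzt, hsplit z, deg_singleton_eq_zero h hzu hzt,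
    zero_add]

lemma IsPathBtw.sdiff_singleton {P : Set E} {u t : V} (hP : IsPathBtw G P u t)
    (hint : ∀ z ∈ VX G P, z ≠ u → z ≠ t → deg G P z = 2) {e : E} {u' : V} (he : e ∈ P)
    (hends : G.ends e = s(u, u')) (hne : (P \ {e}).Nonempty) :
    IsPathBtw G (P \ {e}) u' t ∧
      ∀ z ∈ VX G (P \ {e}), z ≠ u' → z ≠ t → deg G (P \ {e}) z = 2 := by
  obtain ⟨e', -, -, -, -, huniq⟩ := exists_unique_edge_of_deg_eq_one hP.2.2.2.2.1
  obtain rfl := huniq e he (hends ▸ Sym2.mem_mk_left u u')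
  have huu' : u ≠ u' := by
    rintro rfl
    have := two_le_deg_of_loop he hends
    have := hP.2.2.2.2.1
    omega
  have hu't : u' ≠ t := by
    rintro rfl
    rw [hP.eq_singleton_of_ends_eq hint he hends, sdiff_self] at hne
    exact not_nonempty_empty hne
  have hne_u : ∀ z ∈ VX G (P \ {e}), z ≠ u := fun z ⟨f, hf, hzf⟩ hzu =>
    hf.2 (huniq f hf.1 (hzu ▸ hzf))
  have hsplit := deg_eq_add_deg_sdiff (G := G) (singleton_subset_iff.2 he)
  have hWz : ∀ z, z ≠ u → z ≠ u' → deg G (P \ {e}) z = deg G P z := fun z h₁ h₂ => by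
    rw [hsplit z, deg_singleton_eq_zero hends h₁ h₂, zero_add]
  have hWu' : deg G (P \ {e}) u' = 1 := by
    have := hsplit u'
    rw [hint u' ⟨e, he, hends ▸ Sym2.mem_mk_right u u'⟩ huu'.symm hu't,
      deg_singleton_right hends huu'] at this
    omega
  have hWt : deg G (P \ {e}) t = 1 := by
    rw [hWz t hP.2.2.2.1.symm hu't.symm, hP.2.2.2.2.2.1]
  refine ⟨isPathBtw_of_deg hne ?_ (fun z hz => ?_) hWu' hWt hu't, fun z hz hzu' hzt => ?_⟩
  · exact hP.2.1.sdiff_singleton_of_deg_eq_one (hends ▸ Sym2.mem_mk_left u u') hP.2.2.2.2.1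
  · exact (deg_mono sdiff_subset z).trans (hP.2.2.2.2.2.2 z (VX_mono sdiff_subset hz))
  · rw [hWz z (hne_u z hz) hzu']
    exact hint z (VX_mono sdiff_subset hz) (hne_u z hz) hzt

lemma IsPathBtw.exists_split {P : Set E} {u t : V} (hP : IsPathBtw G P u t)
    (hint : ∀ z ∈ VX G P, z ≠ u → z ≠ t → deg G P z = 2) {v : V} (hv : v ∈ VX G P)
    (hvu : v ≠ u) (hvt : v ≠ t) :
    ∃ A B, A ∪ B = P ∧ A ∩ B = ∅ ∧ IsPathBtw G A u v ∧ IsPathBtw G B v t ∧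
      VX G A ∩ VX G B = {v} := by
  induction hn : P.ncard using Nat.strong_induction_on generalizing P u with
  | _ n ih =>
  obtain ⟨e, he, u', hu'u, hends, huniq⟩ := exists_unique_edge_of_deg_eq_one hP.2.2.2.2.1
  have huW : u ∉ VX G (P \ {e}) := fun ⟨f, hf, huf⟩ => hf.2 (huniq f hf.1 huf)
  by_cases hvu' : v = u'
  · subst hvu'
    have htW := mem_VX_sdiff_singleton hends hP.right_mem_VX hP.2.2.2.1.symm hvt.symm
    have hW := (hP.sdiff_singleton hint he hends (nonempty_of_mem_VX htW)).1
    refine ⟨{e}, P \ {e}, union_sdiff_cancel (singleton_subset_iff.2 he), inter_sdiff_self _ _,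
      isPathBtw_singleton hends hu'u.symm, hW, ?_⟩
    rw [VX_singleton hends, insert_inter_of_notMem huW, singleton_inter_of_mem hW.left_mem_VX]
  have hvW := mem_VX_sdiff_singleton hends hv hvu hvu'
  obtain ⟨hW, hWint⟩ := hP.sdiff_singleton hint he hends (nonempty_of_mem_VX hvW)
  have hcard := ncard_sdiff_singleton_add_one he
  obtain ⟨A, B, hAB, hAB0, hA, hB, hABv⟩ := ih _ (by omega) hW hWint hvW hvu' rfl
  have hBW : B ⊆ P \ {e} := hAB ▸ subset_union_right
  refine ⟨insert e A, B, ?_, ?_,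
    hA.insert_left hends fun h => huW (VX_mono (hAB ▸ subset_union_left) h), hB, ?_⟩
  · rw [insert_union, hAB, insert_sdiff_singleton, insert_eq_of_mem he]
  · rw [insert_inter_of_notMem fun heB => (hBW heB).2 rfl, hAB0]
  · have hu'B : u' ∉ VX G B := fun h => by
      have : u' ∈ VX G A ∩ VX G B := ⟨hA.left_mem_VX, h⟩
      rw [hABv] at this
      exact hvu' this.symm
    rw [VX_insert hends, union_inter_distrib_right, hABv, union_eq_right]
    rintro z ⟨rfl | rfl, hzB⟩
    exacts [absurd (VX_mono hBW hzB) huW, absurd hzB hu'B]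

lemma IsCycle.exists_split {C : Set E} {u v : V} (hC : IsCycle G C) (hu : u ∈ VX G C)
    (hv : v ∈ VX G C) (huv : u ≠ v) :
    ∃ P₁ P₂, P₁ ∪ P₂ = C ∧ P₁ ∩ P₂ = ∅ ∧ IsPathBtw G P₁ u v ∧ IsPathBtw G P₂ u v ∧
      VX G P₁ ∩ VX G P₂ = {u, v} := by
  obtain ⟨e, he, hue⟩ := hu
  obtain ⟨t, ht⟩ := Sym2.mem_iff_exists.1 hue
  have hut : u ≠ t := by
    rintro rfl
    rw [hC.eq_singleton_of_loop he ht, VX_singleton ht, pair_eq_singleton] at hv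
    exact huv hv.symm
  have hW := hC.isPathBtw_sdiff_singleton he ht hut
  by_cases hvt : v = t
  · subst hvt
    refine ⟨{e}, C \ {e}, union_sdiff_cancel (singleton_subset_iff.2 he), inter_sdiff_self _ _,
      isPathBtw_singleton ht hut, hW, ?_⟩
    rw [VX_singleton ht, inter_eq_left]
    rintro z (rfl | rfl)
    exacts [hW.left_mem_VX, hW.right_mem_VX]
  have hint : ∀ z ∈ VX G (C \ {e}), z ≠ u → z ≠ t → deg G (C \ {e}) z = 2 := by
    intro z hz hzu hzt
    rw [← hC.2.2 z (VX_mono sdiff_subset hz), deg_eq_add_deg_sdiff (singleton_subset_iff.2 he),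
      deg_singleton_eq_zero ht hzu hzt, zero_add]
  obtain ⟨A, B, hAB, hAB0, hA, hB, hABv⟩ :=
    hW.exists_split hint (mem_VX_sdiff_singleton ht hv huv.symm hvt) huv.symm hvt
  have hAW : A ⊆ C \ {e} := hAB ▸ subset_union_left
  have hinter : ∀ {z}, z ∈ VX G A → z ∈ VX G B → z = v := fun hzA hzB => by
    have : _ ∈ VX G A ∩ VX G B := ⟨hzA, hzB⟩
    rwa [hABv, mem_singleton_iff] at this
  have htA : t ∉ VX G A := fun h => hvt (hinter h hB.right_mem_VX).symm
  refine ⟨A, insert e B, ?_, ?_, hA,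
    hB.symm.insert_left ht fun h => huv (hinter hA.left_mem_VX h), ?_⟩
  · rw [union_insert, hAB, insert_sdiff_singleton, insert_eq_of_mem he]
  · rw [inter_insert_of_notMem fun heA => (hAW heA).2 rfl, hAB0]
  · rw [VX_insert ht, inter_union_distrib_left, hABv, inter_insert_of_mem hA.left_mem_VX,
      inter_singleton_eq_empty.2 htA, insert_empty_eq, singleton_union]

end Paths

section Bicycle

variable [Finite E] {X : Set E}

lemma IsBicycle.two_le_deg (hX : IsBicycle G X) : ∀ v ∈ VX G X, 2 ≤ deg G X v := by
  intro v hv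
  by_contra hlt
  have hdeg : deg G X v = 1 := by
    have := deg_pos_iff.2 hv
    omega
  obtain ⟨e, he, u, -, hends, -⟩ := exists_unique_edge_of_deg_eq_one hdeg
  have hve : v ∈ G.ends e := hends ▸ Sym2.mem_mk_left v u
  have hnot : ∀ C ⊆ X, IsCycle G C → C ⊆ X \ {e} := fun C hCX hC f hf => by
    refine ⟨hCX hf, fun hfe => ?_⟩
    rw [mem_singleton_iff] at hfe
    subst hfe
    have := hC.2.2 v ⟨f, hf, hve⟩
    have := deg_mono (G := G) hCX v
    omega
  obtain ⟨C₁, C₂, h₁, h₂, hC₁, hC₂, hne⟩ := hX.1.2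
  exact hX.2 _ (sdiff_singleton_ssubset.2 he) ⟨hX.1.1.sdiff_singleton_of_deg_eq_one hve hdeg,
    C₁, C₂, hnot C₁ h₁ hC₁, hnot C₂ h₂ hC₂, hC₁, hC₂, hne⟩

lemma IsBicycle.exists_three_le_deg (hX : IsBicycle G X) : ∃ z ∈ VX G X, 3 ≤ deg G X z := by
  obtain ⟨C₁, C₂, h₁, h₂, hC₁, hC₂, hne⟩ := hX.1.2
  have hC₁X : C₁ ≠ X := by
    rintro rfl
    exact hne (hC₁.eq_of_subset hC₂ h₂).symm
  obtain ⟨z, hz, hz3⟩ := exists_three_le_deg_of_isCycle hX.1.1 hC₁ h₁ hC₁X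
  exact ⟨z, VX_mono h₁ hz, hz3⟩

lemma IsBicycle.ncard_eq (hX : IsBicycle G X) : X.ncard = (VX G X).ncard + 1 := by
  obtain ⟨z, hz, hz3⟩ := hX.exists_three_le_deg
  have hlt := ncard_VX_lt_of_two_le_deg hX.two_le_deg hz hz3
  by_contra hne
  -- with one more edge, deleting an edge of a cycle would leave a smaller bicycle
  obtain ⟨C₁, -, h₁, -, hC₁, -, -⟩ := hX.1.2
  obtain ⟨e, he⟩ := hC₁.1
  have hXe := ncard_sdiff_singleton_add_one (h₁ he)
  have := ncard_le_ncard (VX_mono (G := G) (sdiff_subset : X \ {e} ⊆ X))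
  exact hX.2 _ (sdiff_singleton_ssubset.2 (h₁ he))
    ⟨hX.1.1.sdiff_singleton_of_mem_isCycle hC₁ h₁ he, twoCycles_of_ncard_VX_lt (by omega)⟩

lemma IsBicycle.deg_cases (hX : IsBicycle G X) :
    (∃ w ∈ VX G X, deg G X w = 4 ∧ ∀ z ∈ VX G X, z ≠ w → deg G X z = 2) ∨
      ∃ u ∈ VX G X, ∃ v ∈ VX G X, u ≠ v ∧ deg G X u = 3 ∧ deg G X v = 3 ∧
        ∀ z ∈ VX G X, z ≠ u → z ≠ v → deg G X z = 2 := by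
  classical
  have h2 := hX.two_le_deg
  have hsum := sum_deg_sub_two_add_two_mul_ncard_VX h2
  rw [hX.ncard_eq] at hsum
  have hmem : ∀ {v}, v ∈ (toFinite (VX G X)).toFinset ↔ v ∈ VX G X := Finite.mem_toFinset _
  rcases Finset.sum_eq_two_cases (s := (toFinite (VX G X)).toFinset)
      (f := fun v => deg G X v - 2) (by omega) with ⟨w, hw, hw2, hrest⟩ |
    ⟨u, hu, v, hv, huv, hu1, hv1, hrest⟩
  · refine .inl ⟨w, hmem.1 hw, by have := h2 w (hmem.1 hw); omega, fun z hz hzw => ?_⟩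
    have := hrest z (hmem.2 hz) hzw
    have := h2 z hz
    omega
  · refine .inr ⟨u, hmem.1 hu, v, hmem.1 hv, huv, by have := h2 u (hmem.1 hu); omega,
      by have := h2 v (hmem.1 hv); omega, fun z hz hzu hzv => ?_⟩
    have := hrest z (hmem.2 hz) hzu hzv
    have := h2 z hz
    omega

end Bicycle

section Shapes

variable [Finite E] {X C : Set E}

lemma isTightHandcuff_of_deg (hX : ConnOn G X) (hC : IsCycle G C) (hCX : C ⊆ X) {w : V}
    (hw : w ∈ VX G X) (h4 : deg G X w = 4) (h2 : ∀ z ∈ VX G X, z ≠ w → deg G X z = 2) :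
    IsTightHandcuff G X := by
  have hDne := hC.sdiff_nonempty hCX hw (by omega)
  have h3 : ∀ z ∈ VX G C, 3 ≤ deg G X z → z = w := fun z hzC hz3 => by
    by_contra hzw
    have := h2 z (VX_mono hCX hzC) hzw
    omega
  have hinter : ∀ z ∈ VX G C, z ∈ VX G (X \ C) → z = w := fun z hzC hz =>
    h3 z hzC (three_le_deg_of_mem_VX_sdiff hC hCX hzC hz)
  obtain ⟨hwC, hwD⟩ := hC.mem_VX_component_sdiff hX hCX h3 hDne.some_mem
  have hD : IsCycle G (X \ C) := by
    refine ⟨hDne, connOn_of_forall_mem_VX_component fun a ha =>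
      (hC.mem_VX_component_sdiff hX hCX h3 ha).2, fun z hz => ?_⟩
    by_cases hzC : z ∈ VX G C
    · obtain rfl := hinter z hzC hz
      have := hC.deg_sdiff_add_two hCX hzC
      omega
    · rw [deg_sdiff_of_notMem_VX hCX hzC]
      exact h2 z (VX_mono sdiff_subset hz) fun h => hzC (h ▸ hwC)
  refine ⟨C, X \ C, w, hC, hD, inter_sdiff_self C X, ?_, (union_sdiff_cancel hCX).symm⟩
  exact subset_antisymm (fun z ⟨hzC, hz⟩ => hinter z hzC hz)
    (singleton_subset_iff.2 ⟨hwC, VX_mono component_subset hwD⟩)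

lemma eq_or_eq_of_mem_VX_sdiff (hC : IsCycle G C) (hCX : C ⊆ X) {u v z : V}
    (h2 : ∀ z ∈ VX G X, z ≠ u → z ≠ v → deg G X z = 2) (hzC : z ∈ VX G C)
    (hz : z ∈ VX G (X \ C)) : z = u ∨ z = v := by
  by_contra! hne
  have := three_le_deg_of_mem_VX_sdiff hC hCX hzC hz
  have := h2 z (VX_mono hCX hzC) hne.1 hne.2
  omega

lemma isPathBtw_sdiff_of_deg (hX : ConnOn G X) (hC : IsCycle G C) (hCX : C ⊆ X) {u v : V}
    (huv : u ≠ v) (h3u : deg G X u = 3) (h3v : deg G X v = 3)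
    (h2 : ∀ z ∈ VX G X, z ≠ u → z ≠ v → deg G X z = 2) (hu : u ∈ VX G C) (hv : v ∈ VX G C) :
    IsPathBtw G (X \ C) u v := by
  have hDu : deg G (X \ C) u = 1 := by
    have := hC.deg_sdiff_add_two hCX hu
    omega
  have hDv : deg G (X \ C) v = 1 := by
    have := hC.deg_sdiff_add_two hCX hv
    omega
  have hDz : ∀ z ∈ VX G (X \ C), z ≠ u → z ≠ v → deg G (X \ C) z = 2 := by
    intro z hz hzu hzv
    have hzC : z ∉ VX G C := fun hzC =>
      (eq_or_eq_of_mem_VX_sdiff hC hCX h2 hzC hz).elim hzu hzv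
    rw [deg_sdiff_of_notMem_VX hCX hzC]
    exact h2 z (VX_mono sdiff_subset hz) hzu hzv
  have hodd : ∀ z ∈ VX G (X \ C), Odd (deg G (X \ C) z) → z = u ∨ z = v := by
    intro z hz hzo
    by_contra! hne
    rw [hDz z hz hne.1 hne.2] at hzo
    exact Nat.not_odd_iff_even.2 even_two hzo
  -- each component of `X \ C` meets `C` at `u` or `v`, where its degree is odd
  have hconn : ConnOn G (X \ C) := by
    refine connOn_of_forall_mem_VX_component (w := u) fun a ha => ?_
    obtain ⟨z, hzC, hz, -⟩ := exists_three_le_deg_mem_VX_component hX hC hCX ha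
    refine mem_VX_component_of_odd_deg hodd hz ?_
    rcases eq_or_eq_of_mem_VX_sdiff hC hCX h2 hzC (VX_mono component_subset hz) with rfl | rfl
    · rw [hDu]; exact odd_one
    · rw [hDv]; exact odd_one
  refine isPathBtw_of_deg (hC.sdiff_nonempty hCX (VX_mono hCX hu) (by omega)) hconn
    (fun z hz => ?_) hDu hDv huv
  by_cases hzu : z = u
  · rw [hzu, hDu]; omega
  by_cases hzv : z = v
  · rw [hzv, hDv]; omega
  rw [hDz z hz hzu hzv]

lemma isTheta_of_deg (hX : ConnOn G X) (hC : IsCycle G C) (hCX : C ⊆ X) {u v : V}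
    (huv : u ≠ v) (h3u : deg G X u = 3) (h3v : deg G X v = 3)
    (h2 : ∀ z ∈ VX G X, z ≠ u → z ≠ v → deg G X z = 2) (hu : u ∈ VX G C) (hv : v ∈ VX G C) :
    IsTheta G X := by
  have hD := isPathBtw_sdiff_of_deg hX hC hCX huv h3u h3v h2 hu hv
  obtain ⟨P₁, P₂, hP, hP0, hP₁, hP₂, hPv⟩ := hC.exists_split hu hv huv
  have hdisj : ∀ P ⊆ C, P ∩ (X \ C) = ∅ := fun P hPC =>
    subset_empty_iff.1 fun f ⟨hfP, hfD⟩ => hfD.2 (hPC hfP)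
  have hVX : ∀ P ⊆ C, IsPathBtw G P u v → VX G P ∩ VX G (X \ C) = {u, v} := by
    intro P hPC hP
    refine subset_antisymm (fun z ⟨hzP, hz⟩ =>
      eq_or_eq_of_mem_VX_sdiff hC hCX h2 (VX_mono hPC hzP) hz) ?_
    rintro z (rfl | rfl)
    exacts [⟨hP.left_mem_VX, hD.left_mem_VX⟩, ⟨hP.right_mem_VX, hD.right_mem_VX⟩]
  have hP₁C : P₁ ⊆ C := hP ▸ subset_union_left
  have hP₂C : P₂ ⊆ C := hP ▸ subset_union_right
  refine ⟨u, v, P₁, P₂, X \ C, huv, hP₁, hP₂, hD, hP0, hdisj P₁ hP₁C, hdisj P₂ hP₂C, hPv,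
    hVX P₁ hP₁C hP₁, hVX P₂ hP₂C hP₂, ?_⟩
  rw [hP, union_sdiff_cancel hCX]

lemma IsCycle.ncard_VX_sdiff (hC : IsCycle G C) (hCX : C ⊆ X)
    (hcard : X.ncard = (VX G X).ncard + 1) {u : V} (hu : VX G C ∩ VX G (X \ C) = {u}) :
    (VX G (X \ C)).ncard = (X \ C).ncard := by
  have := ncard_union_add_ncard_inter (VX G C) (VX G (X \ C))
  rw [← VX_union, union_sdiff_cancel hCX, hu, ncard_singleton] at this
  have := ncard_sdiff_add_ncard_of_subset hCX
  have := hC.ncard_VX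
  omega

lemma exists_isCycle_isPathBtw_sdiff_of_deg {D : Set E} (hD : ConnOn G D)
    (hcard : (VX G D).ncard ≤ D.ncard) {u v : V} (huv : u ≠ v) (h1u : deg G D u = 1)
    (h3v : deg G D v = 3) (h2 : ∀ z ∈ VX G D, z ≠ u → z ≠ v → deg G D z = 2) :
    ∃ C ⊆ D, IsCycle G C ∧ u ∉ VX G C ∧ IsPathBtw G (D \ C) u v ∧
      VX G (D \ C) ∩ VX G C = {v} := by
  have huD : u ∈ VX G D := deg_pos_iff.1 (by omega)
  obtain ⟨C, hCD, hC⟩ :=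
    exists_isCycle_subset_of_ncard_VX_le (nonempty_of_mem_VX huD) hcard
  have huC : u ∉ VX G C := fun h => by
    have := hC.2.2 u h
    have := deg_mono (G := G) hCD u
    omega
  have h3 : ∀ z ∈ VX G C, 3 ≤ deg G D z → z = v := fun z hzC hz3 => by
    by_contra hzv
    have := h2 z (VX_mono hCD hzC) (fun h => huC (h ▸ hzC)) hzv
    omega
  have hPne := hC.sdiff_nonempty hCD huD (by omega)
  have hvC := (hC.mem_VX_component_sdiff hD hCD h3 hPne.some_mem).1
  have hPu : deg G (D \ C) u = 1 := by rw [deg_sdiff_of_notMem_VX hCD huC, h1u]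
  have hPv : deg G (D \ C) v = 1 := by
    have := hC.deg_sdiff_add_two hCD hvC
    omega
  have hP : IsPathBtw G (D \ C) u v := by
    refine isPathBtw_of_deg hPne (connOn_of_forall_mem_VX_component fun a ha =>
      (hC.mem_VX_component_sdiff hD hCD h3 ha).2) (fun z hz => ?_) hPu hPv huv
    by_cases hzu : z = u
    · rw [hzu, hPu]; omega
    by_cases hzv : z = v
    · rw [hzv, hPv]; omega
    rw [← h2 z (VX_mono sdiff_subset hz) hzu hzv]
    exact deg_mono sdiff_subset z
  refine ⟨C, hCD, hC, huC, hP, subset_antisymm (fun z ⟨hz, hzC⟩ =>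
    h3 z hzC (three_le_deg_of_mem_VX_sdiff hC hCD hzC hz)) ?_⟩
  exact singleton_subset_iff.2 ⟨hP.right_mem_VX, hvC⟩

lemma isLooseHandcuff_of_deg (hX : ConnOn G X) (hcard : X.ncard = (VX G X).ncard + 1)
    (hC : IsCycle G C) (hCX : C ⊆ X) {u v : V} (huv : u ≠ v) (h3u : deg G X u = 3)
    (h3v : deg G X v = 3) (h2 : ∀ z ∈ VX G X, z ≠ u → z ≠ v → deg G X z = 2)
    (hu : u ∈ VX G C) (hv : v ∉ VX G C) : IsLooseHandcuff G X := by
  have h3 : ∀ z ∈ VX G C, 3 ≤ deg G X z → z = u := fun z hzC hz3 => by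
    by_contra hzu
    have := h2 z (VX_mono hCX hzC) hzu fun h => hv (h ▸ hzC)
    omega
  have hinter : ∀ z ∈ VX G C, z ∈ VX G (X \ C) → z = u := fun z hzC hz =>
    h3 z hzC (three_le_deg_of_mem_VX_sdiff hC hCX hzC hz)
  have hDu : deg G (X \ C) u = 1 := by
    have := hC.deg_sdiff_add_two hCX hu
    omega
  have hDv : deg G (X \ C) v = 3 := by rw [deg_sdiff_of_notMem_VX hCX hv, h3v]
  have hDz : ∀ z ∈ VX G (X \ C), z ≠ u → z ≠ v → deg G (X \ C) z = 2 := by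
    intro z hz hzu hzv
    rw [deg_sdiff_of_notMem_VX hCX fun hzC => hzu (hinter z hzC hz)]
    exact h2 z (VX_mono sdiff_subset hz) hzu hzv
  have hDconn : ConnOn G (X \ C) := connOn_of_forall_mem_VX_component fun a ha =>
    (hC.mem_VX_component_sdiff hX hCX h3 ha).2
  have hVX0 : VX G C ∩ VX G (X \ C) = {u} :=
    subset_antisymm (fun z ⟨hzC, hz⟩ => hinter z hzC hz)
      (singleton_subset_iff.2 ⟨hu, deg_pos_iff.1 (by omega)⟩)
  obtain ⟨C₂, hC₂D, hC₂, huC₂, hP, hPC₂⟩ := exists_isCycle_isPathBtw_sdiff_of_deg hDconn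
    (hC.ncard_VX_sdiff hCX hcard hVX0).le huv hDu hDv hDz
  refine ⟨C, C₂, (X \ C) \ C₂, u, v, hC, hC₂, ?_, hP, ?_, hPC₂, ?_, ?_, ?_⟩
  · exact subset_empty_iff.1 fun z ⟨hzC, hzC₂⟩ =>
      huC₂ (hinter z hzC (VX_mono hC₂D hzC₂) ▸ hzC₂)
  · exact subset_antisymm (fun z ⟨hzP, hzC⟩ => hinter z hzC (VX_mono sdiff_subset hzP))
      (singleton_subset_iff.2 ⟨hP.left_mem_VX, hu⟩)
  · exact subset_empty_iff.1 fun f ⟨hfP, hfC⟩ => hfP.1.2 hfC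
  · exact subset_empty_iff.1 fun f ⟨hfP, hfC₂⟩ => hfP.2 hfC₂
  · rw [union_assoc, union_sdiff_cancel hC₂D, union_sdiff_cancel hCX]

end Shapes

end Bicirc

open Bicirc in
theorem stmt0_general {V E : Type*} [Fintype E] (G : MGraph V E) (X : Set E)
    (hX : IsBicycle G X) :
    IsTheta G X ∨ IsLooseHandcuff G X ∨ IsTightHandcuff G X := by
  obtain ⟨C, -, hCX, -, hC, -, -⟩ := hX.1.2
  rcases hX.deg_cases with ⟨w, hw, h4, h2⟩ | ⟨u, hu, v, -, huv, h3u, h3v, h2⟩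
  · exact .inr (.inr (isTightHandcuff_of_deg hX.1.1 hC hCX hw h4 h2))
  obtain ⟨z, hzC, hz, -⟩ := exists_three_le_deg_mem_VX_component hX.1.1 hC hCX
    (hC.sdiff_nonempty hCX hu (by omega)).some_mem
  have h2' : ∀ z ∈ VX G X, z ≠ v → z ≠ u → deg G X z = 2 := fun z hz hzv hzu => h2 z hz hzu hzv
  by_cases huC : u ∈ VX G C <;> by_cases hvC : v ∈ VX G C
  · exact .inl (isTheta_of_deg hX.1.1 hC hCX huv h3u h3v h2 huC hvC)
  · exact .inr (.inl (isLooseHandcuff_of_deg hX.1.1 hX.ncard_eq hC hCX huv h3u h3v h2 huC hvC))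
  · exact .inr (.inl
      (isLooseHandcuff_of_deg hX.1.1 hX.ncard_eq hC hCX huv.symm h3v h3u h2' hvC huC))
  · rcases eq_or_eq_of_mem_VX_sdiff hC hCX h2 hzC (VX_mono component_subset hz) with rfl | rfl
    exacts [(huC hzC).elim, (hvC hzC).elim]

open Bicirc in
theorem stmt0 {V E : Type*} [Fintype V] [Fintype E] (G : MGraph V E) (X : Set E)
    (hX : IsBicycle G X) :
    IsTheta G X ∨ IsLooseHandcuff G X ∨ IsTightHandcuff G X :=
  stmt0_general G X hX
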